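/- Let G be a graph and let C: v_1, ..., v_n, v_1 be a Hamiltonian cycle of G with n odd. If for all i (mod n) the chord v_i v_{i+2} is an edge of G, and additionally for every j ≥ 2, v_1 v_{2j+1} and v_1 v_{2j} are edges of G whenever the absence of such a chord would yield an IPD, then v_1 is adjacent to all other vertices of G; applying this to every vertex shows G is the complete graph K_n. -/
import Mathlib


open SimpleGraph

variable {V : Type*} [Fintype V]

/-- P is a set of vertices inducing a path on n vertices in G. -/
def IsInducedPathOn (G : SimpleGraph V) (P : Set V) (n : ℕ) : Prop :=
  Nonempty (G.induce P ≃g pathGraph n)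

/-- G has an induced path decomposition into induced paths each of order ≥ 2. -/
def HasIPD (G : SimpleGraph V) : Prop :=
  ∃ D : Set (Set V), Setoid.IsPartition D ∧
    ∀ P ∈ D, ∃ n, 2 ≤ n ∧ IsInducedPathOn G P n

section Aux

variable {G : SimpleGraph V}

lemma isInducedPathOn_pair {a b : V} (hab : G.Adj a b) :
    IsInducedPathOn G {a, b} 2 := by
  classical
  have nab : a ≠ b := hab.ne
  refine ⟨⟨⟨fun x => if (x : V) = a then 0 else 1,
      fun i => if i = 0 then ⟨a, by simp⟩ else ⟨b, by simp⟩, ?_, ?_⟩, ?_⟩⟩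
  · rintro ⟨x, hx⟩
    simp only [Set.mem_insert_iff, Set.mem_singleton_iff] at hx
    rcases hx with rfl | rfl
    · simp
    · simp [nab.symm]
  · intro i
    fin_cases i <;> simp [nab.symm]
  · rintro ⟨x, hx⟩ ⟨y, hy⟩
    simp only [Set.mem_insert_iff, Set.mem_singleton_iff] at hx hy
    rcases hx with rfl | rfl <;> rcases hy with rfl | rfl <;>
      simp [pathGraph_adj, nab, nab.symm, hab, hab.symm]

lemma isInducedPathOn_triple {a b c : V} (hab : G.Adj a b) (hbc : G.Adj b c)
    (hac : ¬ G.Adj a c) (nac : a ≠ c) :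
    IsInducedPathOn G {a, b, c} 3 := by
  classical
  have nab : a ≠ b := hab.ne
  have nbc : b ≠ c := hbc.ne
  have hca : ¬ G.Adj c a := fun h => hac h.symm
  refine ⟨⟨⟨fun x => if (x : V) = a then 0 else if (x : V) = b then 1 else 2,
      fun i => if i = 0 then ⟨a, by simp⟩ else if i = 1 then ⟨b, by simp⟩ else ⟨c, by simp⟩,
      ?_, ?_⟩, ?_⟩⟩
  · rintro ⟨x, hx⟩
    simp only [Set.mem_insert_iff, Set.mem_singleton_iff] at hx
    rcases hx with rfl | rfl | rfl
    · simp
    · simp [nab.symm]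
    · simp [nac.symm, nbc.symm]
  · intro i
    fin_cases i <;> simp [nab.symm, nac.symm, nbc.symm]
  · rintro ⟨x, hx⟩ ⟨y, hy⟩
    simp only [Set.mem_insert_iff, Set.mem_singleton_iff] at hx hy
    rcases hx with rfl | rfl | rfl <;> rcases hy with rfl | rfl | rfl <;>
      simp [pathGraph_adj, nab, nab.symm, nbc, nbc.symm, nac, nac.symm,
        hab, hab.symm, hbc, hbc.symm, hac, hca]

lemma hasIPD_of_blocks (c : V → Set V)
    (hmem : ∀ x, x ∈ c x) (hconst : ∀ x y, y ∈ c x → c y = c x)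
    (hpath : ∀ x, ∃ m, 2 ≤ m ∧ IsInducedPathOn G (c x) m) : HasIPD G := by
  refine ⟨Set.range c, ⟨?_, ?_⟩, ?_⟩
  · rintro ⟨x, hx⟩
    exact absurd (hmem x) (by rw [hx]; exact Set.notMem_empty x)
  · intro a
    refine ⟨c a, ⟨⟨a, rfl⟩, hmem a⟩, ?_⟩
    rintro P ⟨⟨x, rfl⟩, haP⟩
    exact (hconst x a haP).symm
  · rintro P ⟨x, rfl⟩
    exact hpath x

lemma hasIPD_of_natBlocks {n : ℕ} (hn0 : 0 < n)
    (v : ZMod n → V) (hbij : Function.Bijective v)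
    (B : ℕ → Set ℕ)
    (hself : ∀ j, j < n → j ∈ B j)
    (hlt : ∀ j, j < n → ∀ m ∈ B j, m < n)
    (hcl : ∀ j, j < n → ∀ m ∈ B j, B m = B j)
    (hpath : ∀ j, j < n → ∃ k, 2 ≤ k ∧ IsInducedPathOn G ((fun m : ℕ => v m) '' B j) k) :
    HasIPD G := by
  haveI : NeZero n := ⟨by omega⟩
  set e := Equiv.ofBijective v hbij with he
  set idx : V → ℕ := fun x => (e.symm x).val with hidx
  have hidxlt : ∀ x, idx x < n := fun x => ZMod.val_lt _
  have hv : ∀ x, v (idx x) = x := by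
    intro x
    have h1 : ((idx x : ℕ) : ZMod n) = e.symm x := ZMod.natCast_rightInverse _
    rw [h1]
    exact e.apply_symm_apply x
  have hidxv : ∀ m : ℕ, m < n → idx (v m) = m := by
    intro m hm
    have h1 : e ((m : ℕ) : ZMod n) = v m := rfl
    rw [hidx]
    simp only [← h1, Equiv.symm_apply_apply]
    exact ZMod.val_cast_of_lt hm
  apply hasIPD_of_blocks (fun x => (fun m : ℕ => v m) '' B (idx x))
  · intro x
    exact ⟨idx x, hself _ (hidxlt x), hv x⟩
  · intro x y hy
    obtain ⟨m, hmB, hmv⟩ := hy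
    have hmn : m < n := hlt _ (hidxlt x) _ hmB
    have : idx y = m := by rw [← hmv]; exact hidxv m hmn
    simp only [this, hcl _ (hidxlt x) _ hmB]
  · intro x
    exact hpath _ (hidxlt x)

/-- partner of j in a consecutive pairing {1,2},{3,4},... -/
def opN (j : ℕ) : ℕ := if j % 2 = 1 then j + 1 else j - 1

lemma opN_odd {j : ℕ} (h : j % 2 = 1) : opN j = j + 1 := by simp [opN, h]

lemma opN_even {j : ℕ} (h : j % 2 = 0) : opN j = j - 1 := by simp [opN, h]

def oddB (k : ℕ) (j : ℕ) : Set ℕ :=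
  if j = 0 ∨ j = k - 2 ∨ j = k then {0, k - 2, k}
  else if j = k - 1 ∨ j = k + 1 then {k - 1, k + 1}
  else {j, opN j}

def evenB (k : ℕ) (j : ℕ) : Set ℕ :=
  if j = 0 ∨ j = k - 1 ∨ j = k then {0, k - 1, k}
  else {j, opN j}

lemma construction_odd {n : ℕ} (hodd : Odd n) (h3 : 3 ≤ n)
    (v : ZMod n → V) (hbij : Function.Bijective v)
    (hcyc : ∀ i : ZMod n, G.Adj (v i) (v (i + 1)))
    (hchord : ∀ i : ZMod n, G.Adj (v i) (v (i + 2)))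
    {k : ℕ} (hk3 : 3 ≤ k) (hkn : k < n) (hkodd : k % 2 = 1)
    (hprev : G.Adj (v 0) (v ((k - 2 : ℕ))))
    (hnadj : ¬ G.Adj (v 0) (v (k : ℕ))) : HasIPD G := by
  have hn2 : n % 2 = 1 := Nat.odd_iff.mp hodd
  have hkn2 : k + 1 < n := by omega
  set w : ℕ → V := fun m => v m with hw
  have winj : ∀ j m : ℕ, j < n → m < n → w j = w m → j = m := by
    intro j m hj hm h
    have := hbij.injective h
    have h2 : ((j : ℕ) : ZMod n).val = ((m : ℕ) : ZMod n).val := by rw [this]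
    rwa [ZMod.val_cast_of_lt hj, ZMod.val_cast_of_lt hm] at h2
  have wcyc : ∀ j : ℕ, G.Adj (w j) (w (j + 1)) := by
    intro j
    have := hcyc (j : ZMod n)
    rwa [show ((j : ZMod n) + 1) = ((j + 1 : ℕ) : ZMod n) by push_cast; ring] at this
  have wchord : ∀ j : ℕ, G.Adj (w j) (w (j + 2)) := by
    intro j
    have := hchord (j : ZMod n)
    rwa [show ((j : ZMod n) + 2) = ((j + 2 : ℕ) : ZMod n) by push_cast; ring] at this
  have hw0 : w 0 = v 0 := by simp [hw]
  apply hasIPD_of_natBlocks (G := G) (by omega) v hbij (oddB k)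
  · intro j hj
    rw [oddB]
    split_ifs with h1 h2
    · simpa using h1
    · simpa using h2
    · simp
  · intro j hj m hm
    rw [oddB] at hm
    split_ifs at hm with h1 h2
    · simp only [Set.mem_insert_iff, Set.mem_singleton_iff] at hm
      omega
    · simp only [Set.mem_insert_iff, Set.mem_singleton_iff] at hm
      omega
    · simp only [Set.mem_insert_iff, Set.mem_singleton_iff] at hm
      rcases hm with rfl | rfl
      · exact hj
      · rcases Nat.mod_two_eq_zero_or_one j with h | h
        · rw [opN_even h] <;> omega
        · rw [opN_odd h] <;> omega
  · intro j hj m hm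
    by_cases h1 : j = 0 ∨ j = k - 2 ∨ j = k
    · rw [oddB, if_pos h1] at hm
      have hm' : m = 0 ∨ m = k - 2 ∨ m = k := by simpa using hm
      rw [oddB, if_pos hm', oddB, if_pos h1]
    · by_cases h2 : j = k - 1 ∨ j = k + 1
      · rw [oddB, if_neg h1, if_pos h2] at hm
        have hm' : m = k - 1 ∨ m = k + 1 := by simpa using hm
        have hm1 : ¬ (m = 0 ∨ m = k - 2 ∨ m = k) := by omega
        rw [oddB, if_neg hm1, if_pos hm', oddB, if_neg h1, if_pos h2]
      · rw [oddB, if_neg h1, if_neg h2] at hm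
        have hm' : m = j ∨ m = opN j := by simpa using hm
        rcases hm' with rfl | rfl
        · rfl
        · have h3' : ¬ (opN j = 0 ∨ opN j = k - 2 ∨ opN j = k) := by
            rcases Nat.mod_two_eq_zero_or_one j with h | h
            · rw [opN_even h] <;> omega
            · rw [opN_odd h] <;> omega
          have h4 : ¬ (opN j = k - 1 ∨ opN j = k + 1) := by
            rcases Nat.mod_two_eq_zero_or_one j with h | h
            · rw [opN_even h] <;> omega
            · rw [opN_odd h] <;> omega
          have h5 : opN (opN j) = j := by
            rcases Nat.mod_two_eq_zero_or_one j with h | h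
            · rw [opN_even h, opN_odd (by omega)]; omega
            · rw [opN_odd h, opN_even (by omega)]; omega
          rw [oddB, if_neg h3', if_neg h4, oddB, if_neg h1, if_neg h2, h5, Set.pair_comm]
  · intro j hj
    by_cases h1 : j = 0 ∨ j = k - 2 ∨ j = k
    · rw [oddB, if_pos h1]
      refine ⟨3, by norm_num, ?_⟩
      have himg : (fun m : ℕ => v m) '' {0, k - 2, k} = {w 0, w (k - 2), w k} := by
        rw [Set.image_insert_eq, Set.image_insert_eq, Set.image_singleton]
      rw [himg]
      have e1 : G.Adj (w 0) (w (k - 2)) := by rw [hw0]; exact hprev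
      have e2 : G.Adj (w (k - 2)) (w k) := by
        have := wchord (k - 2)
        rwa [show k - 2 + 2 = k by omega] at this
      have e3 : ¬ G.Adj (w 0) (w k) := by rw [hw0]; exact hnadj
      have e4 : w 0 ≠ w k := fun h => by have := winj 0 k (by omega) hkn h; omega
      exact isInducedPathOn_triple e1 e2 e3 e4
    · by_cases h2 : j = k - 1 ∨ j = k + 1
      · rw [oddB, if_neg h1, if_pos h2]
        refine ⟨2, le_refl _, ?_⟩
        have himg : (fun m : ℕ => v m) '' {k - 1, k + 1} = {w (k - 1), w (k + 1)} := by
          rw [Set.image_insert_eq, Set.image_singleton]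
        rw [himg]
        have e1 : G.Adj (w (k - 1)) (w (k + 1)) := by
          have := wchord (k - 1)
          rwa [show k - 1 + 2 = k + 1 by omega] at this
        exact isInducedPathOn_pair e1
      · rw [oddB, if_neg h1, if_neg h2]
        refine ⟨2, le_refl _, ?_⟩
        have himg : (fun m : ℕ => v m) '' {j, opN j} = {w j, w (opN j)} := by
          rw [Set.image_insert_eq, Set.image_singleton]
        rw [himg]
        by_cases hj2 : j % 2 = 1
        · have hop : opN j = j + 1 := by unfold opN; rw [if_pos hj2]
          rw [hop]
          exact isInducedPathOn_pair (wcyc j)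
        · have hop : opN j = j - 1 := by unfold opN; rw [if_neg hj2]
          rw [hop]
          have e1 : G.Adj (w (j - 1)) (w j) := by
            have := wcyc (j - 1)
            rwa [show j - 1 + 1 = j by omega] at this
          exact isInducedPathOn_pair e1.symm

lemma construction_even {n : ℕ} (hodd : Odd n) (h3 : 3 ≤ n)
    (v : ZMod n → V) (hbij : Function.Bijective v)
    (hcyc : ∀ i : ZMod n, G.Adj (v i) (v (i + 1)))
    (hchord : ∀ i : ZMod n, G.Adj (v i) (v (i + 2)))
    {k : ℕ} (hk3 : 3 ≤ k) (hkn : k < n) (hkeven : k % 2 = 0)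
    (hprev : G.Adj (v 0) (v ((k - 1 : ℕ))))
    (hnadj : ¬ G.Adj (v 0) (v (k : ℕ))) : HasIPD G := by
  have hn2 : n % 2 = 1 := Nat.odd_iff.mp hodd
  set w : ℕ → V := fun m => v m with hw
  have winj : ∀ j m : ℕ, j < n → m < n → w j = w m → j = m := by
    intro j m hj hm h
    have := hbij.injective h
    have h2 : ((j : ℕ) : ZMod n).val = ((m : ℕ) : ZMod n).val := by rw [this]
    rwa [ZMod.val_cast_of_lt hj, ZMod.val_cast_of_lt hm] at h2
  have wcyc : ∀ j : ℕ, G.Adj (w j) (w (j + 1)) := by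
    intro j
    have := hcyc (j : ZMod n)
    rwa [show ((j : ZMod n) + 1) = ((j + 1 : ℕ) : ZMod n) by push_cast; ring] at this
  have hw0 : w 0 = v 0 := by simp [hw]
  apply hasIPD_of_natBlocks (G := G) (by omega) v hbij (evenB k)
  · intro j hj
    rw [evenB]
    split_ifs with h1
    · simpa using h1
    · simp
  · intro j hj m hm
    rw [evenB] at hm
    split_ifs at hm with h1
    · simp only [Set.mem_insert_iff, Set.mem_singleton_iff] at hm
      omega
    · simp only [Set.mem_insert_iff, Set.mem_singleton_iff] at hm
      rcases hm with rfl | rfl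
      · exact hj
      · rcases Nat.mod_two_eq_zero_or_one j with h | h
        · rw [opN_even h] <;> omega
        · rw [opN_odd h] <;> omega
  · intro j hj m hm
    by_cases h1 : j = 0 ∨ j = k - 1 ∨ j = k
    · rw [evenB, if_pos h1] at hm
      have hm' : m = 0 ∨ m = k - 1 ∨ m = k := by simpa using hm
      rw [evenB, if_pos hm', evenB, if_pos h1]
    · rw [evenB, if_neg h1] at hm
      have hm' : m = j ∨ m = opN j := by simpa using hm
      rcases hm' with rfl | rfl
      · rfl
      · have h3' : ¬ (opN j = 0 ∨ opN j = k - 1 ∨ opN j = k) := by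
          rcases Nat.mod_two_eq_zero_or_one j with h | h
          · rw [opN_even h] <;> omega
          · rw [opN_odd h] <;> omega
        have h5 : opN (opN j) = j := by
          rcases Nat.mod_two_eq_zero_or_one j with h | h
          · rw [opN_even h, opN_odd (by omega)]; omega
          · rw [opN_odd h, opN_even (by omega)]; omega
        rw [evenB, if_neg h3', evenB, if_neg h1, h5, Set.pair_comm]
  · intro j hj
    by_cases h1 : j = 0 ∨ j = k - 1 ∨ j = k
    · rw [evenB, if_pos h1]
      refine ⟨3, by norm_num, ?_⟩
      have himg : (fun m : ℕ => v m) '' {0, k - 1, k} = {w 0, w (k - 1), w k} := by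
        rw [Set.image_insert_eq, Set.image_insert_eq, Set.image_singleton]
      rw [himg]
      have e1 : G.Adj (w 0) (w (k - 1)) := by rw [hw0]; exact hprev
      have e2 : G.Adj (w (k - 1)) (w k) := by
        have := wcyc (k - 1)
        rwa [show k - 1 + 1 = k by omega] at this
      have e3 : ¬ G.Adj (w 0) (w k) := by rw [hw0]; exact hnadj
      have e4 : w 0 ≠ w k := fun h => by have := winj 0 k (by omega) hkn h; omega
      exact isInducedPathOn_triple e1 e2 e3 e4
    · rw [evenB, if_neg h1]
      refine ⟨2, le_refl _, ?_⟩
      have himg : (fun m : ℕ => v m) '' {j, opN j} = {w j, w (opN j)} := by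
        rw [Set.image_insert_eq, Set.image_singleton]
      rw [himg]
      by_cases hj2 : j % 2 = 1
      · have hop : opN j = j + 1 := by unfold opN; rw [if_pos hj2]
        rw [hop]
        exact isInducedPathOn_pair (wcyc j)
      · have hop : opN j = j - 1 := by unfold opN; rw [if_neg hj2]
        rw [hop]
        have e1 : G.Adj (w (j - 1)) (w j) := by
          have := wcyc (j - 1)
          rwa [show j - 1 + 1 = j by omega] at this
        exact isInducedPathOn_pair e1.symm

lemma adj_all {n : ℕ} (hodd : Odd n) (h3 : 3 ≤ n)
    (v : ZMod n → V) (hbij : Function.Bijective v)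
    (hcyc : ∀ i : ZMod n, G.Adj (v i) (v (i + 1)))
    (hchord : ∀ i : ZMod n, G.Adj (v i) (v (i + 2)))
    (hnoIPD : ¬ HasIPD G) :
    ∀ m : ℕ, 1 ≤ m → m < n → G.Adj (v 0) (v m) := by
  intro m
  induction m using Nat.strong_induction_on with
  | _ m ih =>
    intro h1 hmn
    by_cases hm1 : m = 1
    · subst hm1
      simpa using hcyc 0
    · by_cases hm2 : m = 2
      · subst hm2
        simpa using hchord 0
      · have hm3 : 3 ≤ m := by omega
        by_contra hnadj
        by_cases hmo : m % 2 = 1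
        · exact hnoIPD (construction_odd hodd h3 v hbij hcyc hchord hm3 hmn hmo
            (ih (m - 2) (by omega) (by omega) (by omega)) hnadj)
        · exact hnoIPD (construction_even hodd h3 v hbij hcyc hchord hm3 hmn (by omega)
            (ih (m - 1) (by omega) (by omega) (by omega)) hnadj)

end Aux

/-- let G have a Hamiltonian cycle v_1, ..., v_n, v_1 with n odd, n ≥ 3.
If every chord v_i v_{i+2} is an edge of G and G has no IPD (so that every chord whose
absence would yield an IPD must be present), then every vertex v_i is adjacent to all
other vertices, i.e. G is the complete graph K_n. -/
theorem hamiltonian_odd_no_IPD_complete (G : SimpleGraph V) (n : ℕ)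
    (hn : n = Fintype.card V) (hodd : Odd n) (h3 : 3 ≤ n)
    (v : ZMod n → V) (hbij : Function.Bijective v)
    (hcyc : ∀ i : ZMod n, G.Adj (v i) (v (i + 1)))
    (hchord : ∀ i : ZMod n, G.Adj (v i) (v (i + 2)))
    (hnoIPD : ¬ HasIPD G) :
    (∀ w : V, w ≠ v 0 → G.Adj (v 0) w) ∧ G = ⊤ := by
  haveI : NeZero n := ⟨by omega⟩
  have key : ∀ (u : ZMod n → V), Function.Bijective u →
      (∀ i, G.Adj (u i) (u (i + 1))) → (∀ i, G.Adj (u i) (u (i + 2))) →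
      ∀ w : V, w ≠ u 0 → G.Adj (u 0) w := by
    intro u hu hc1 hc2 w hw
    obtain ⟨i, rfl⟩ := hu.surjective w
    have hi : i ≠ 0 := fun h => hw (by rw [h])
    have hv0 : i.val ≠ 0 := by
      intro h
      apply hi
      have := ZMod.natCast_rightInverse (n := n) i
      rw [← this, h]
      simp
    have h2 : i.val < n := ZMod.val_lt i
    have := adj_all hodd h3 u hu hc1 hc2 hnoIPD i.val (by omega) h2
    rwa [show ((i.val : ℕ) : ZMod n) = i from ZMod.natCast_rightInverse i] at this
  refine ⟨key v hbij hcyc hchord, ?_⟩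
  ext a b
  simp only [top_adj]
  constructor
  · exact fun h => h.ne
  · intro hab
    obtain ⟨i, rfl⟩ := hbij.surjective a
    set u : ZMod n → V := fun j => v (i + j) with hu
    have hub : Function.Bijective u := hbij.comp (Equiv.addLeft i).bijective
    have huc : ∀ j, G.Adj (u j) (u (j + 1)) := fun j => by
      simpa [hu, add_assoc] using hcyc (i + j)
    have huch : ∀ j, G.Adj (u j) (u (j + 2)) := fun j => by
      simpa [hu, add_assoc] using hchord (i + j)
    have hbu : b ≠ u 0 := by simpa [hu] using hab.symm
    have := key u hub huc huch b hbu
    simpa [hu] using this
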